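/- arXiv:2311.04450 — 11 statements merged into one kernel-verified Lean document; each statement's English description precedes it below -/
import Mathlib

section
/- Let a, b, c, d, e be real numbers with e > 1, and let f = (ab + cd + ace + bde + √(Δ_{ade})·√(Δ_{bce}))/(e² − 1), where Δ_{xyz} = x² + y² + z² + 2xyz − 1 and we assume Δ_{ade} ≥ 0 and Δ_{bce} ≥ 0. Then a² + b² + c² + d² + e² + f² + 2(ade + bce + abf + cdf + abcd + acef + bdef) − a²c² − b²d² − e²f² − 1 = 0. -/
/-!
The left-hand side is a quadratic polynomial in `f` with leading coefficient `1 - e ^ 2`, and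
its discriminant factors as `4 * Delta a d e * Delta b c e`. Since both factors are nonnegative,
the discriminant is the square of `2 * √(Delta a d e) * √(Delta b c e)`, and the given `f` is
one of the two roots of the quadratic formula.
-/

/-- The discriminant of inversive distance. -/
def Delta (x y z : ℝ) : ℝ := x ^ 2 + y ^ 2 + z ^ 2 + 2 * x * y * z - 1

theorem discrim_ptolemy (a b c d e : ℝ) :
    discrim (1 - e ^ 2) (2 * (a * b + c * d + a * c * e + b * d * e))
      (a ^ 2 + b ^ 2 + c ^ 2 + d ^ 2 + e ^ 2 + 2 * (a * d * e + b * c * e + a * b * c * d)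
        - a ^ 2 * c ^ 2 - b ^ 2 * d ^ 2 - 1)
      = 4 * (Delta a d e * Delta b c e) := by
  unfold discrim Delta
  ring

theorem generalized_ptolemy (a b c d e f : ℝ) (he : 1 < e)
    (hade : 0 ≤ Delta a d e) (hbce : 0 ≤ Delta b c e)
    (hf : f = (a * b + c * d + a * c * e + b * d * e +
      Real.sqrt (Delta a d e) * Real.sqrt (Delta b c e)) / (e ^ 2 - 1)) :
    a ^ 2 + b ^ 2 + c ^ 2 + d ^ 2 + e ^ 2 + f ^ 2
      + 2 * (a * d * e + b * c * e + a * b * f + c * d * f + a * b * c * d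
        + a * c * e * f + b * d * e * f)
      - a ^ 2 * c ^ 2 - b ^ 2 * d ^ 2 - e ^ 2 * f ^ 2 - 1 = 0 := by
  have hlead : 1 - e ^ 2 ≠ 0 := by nlinarith
  have hlead' : e ^ 2 - 1 ≠ 0 := by nlinarith
  have hdiscrim : discrim (1 - e ^ 2) (2 * (a * b + c * d + a * c * e + b * d * e))
      (a ^ 2 + b ^ 2 + c ^ 2 + d ^ 2 + e ^ 2 + 2 * (a * d * e + b * c * e + a * b * c * d)
        - a ^ 2 * c ^ 2 - b ^ 2 * d ^ 2 - 1)
      = (2 * (√(Delta a d e) * √(Delta b c e))) * (2 * (√(Delta a d e) * √(Delta b c e))) := by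
    rw [discrim_ptolemy]
    linear_combination (-4 * Delta b c e) * Real.mul_self_sqrt hade
      - 4 * (√(Delta a d e) * √(Delta a d e)) * Real.mul_self_sqrt hbce
  have hroot := (quadratic_eq_zero_iff hlead hdiscrim f).2 <| Or.inr <| by
    rw [hf]
    field_simp
    ring
  linear_combination hroot
end

section
/- With a, b, c, d, e real, e > 1, Δ_{ade} ≥ 0, Δ_{bce} ≥ 0, and f = (ab + cd + ace + bde + √(Δ_{ade})√(Δ_{bce}))/(e² − 1), if moreover ((d + ae)√(Δ_{bce}) + (c + be)√(Δ_{ade}))/(e² − 1) ≥ 0, then Δ_{abf} = (((d + ae)√(Δ_{bce}) + (c + be)√(Δ_{ade}))/(e² − 1))², i.e. √(Δ_{abf}) = ((d + ae)√(Δ_{bce}) + (c + be)√(Δ_{ade}))/(e² − 1). -/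
theorem Delta_eq_sq_sub_mul (x y z : ℝ) :
    Delta x y z = (y + x * z) ^ 2 - (x ^ 2 - 1) * (z ^ 2 - 1) := by
  unfold Delta; ring

theorem Delta_swap (x y z : ℝ) : Delta x y z = Delta x z y := by
  unfold Delta; ring

theorem sq_add_mul_sub_mul_sq_sub {R : Type*} [CommRing R] (u v P Q : R) :
    (u * v + P * Q) ^ 2 - (u ^ 2 - P ^ 2) * (v ^ 2 - Q ^ 2) = (u * Q + v * P) ^ 2 := by
  ring

theorem Delta_mul_sq_eq_of_flip {a b c d e f P Q : ℝ}
    (hP : P ^ 2 = Delta a d e) (hQ : Q ^ 2 = Delta b c e)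
    (hf : (f + a * b) * (e ^ 2 - 1) = (d + a * e) * (c + b * e) + P * Q) :
    Delta a b f * (e ^ 2 - 1) ^ 2 = ((d + a * e) * Q + (c + b * e) * P) ^ 2 := by
  rw [Delta_eq_sq_sub_mul] at hP hQ
  rw [← sq_add_mul_sub_mul_sq_sub, ← hf, hP, hQ, Delta_swap, Delta_eq_sq_sub_mul]
  ring

theorem sqrt_delta_abf (a b c d e f : ℝ) (he : 1 < e)
    (hade : 0 ≤ Delta a d e) (hbce : 0 ≤ Delta b c e)
    (hf : f = (a * b + c * d + a * c * e + b * d * e +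
      Real.sqrt (Delta a d e) * Real.sqrt (Delta b c e)) / (e ^ 2 - 1))
    (hpos : 0 ≤ ((d + a * e) * Real.sqrt (Delta b c e)
      + (c + b * e) * Real.sqrt (Delta a d e)) / (e ^ 2 - 1)) :
    Delta a b f = (((d + a * e) * Real.sqrt (Delta b c e)
      + (c + b * e) * Real.sqrt (Delta a d e)) / (e ^ 2 - 1)) ^ 2 ∧
    Real.sqrt (Delta a b f) = ((d + a * e) * Real.sqrt (Delta b c e)
      + (c + b * e) * Real.sqrt (Delta a d e)) / (e ^ 2 - 1) := by
  have hk : e ^ 2 - 1 ≠ 0 := by nlinarith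
  have hf' : (f + a * b) * (e ^ 2 - 1) = (d + a * e) * (c + b * e)
      + Real.sqrt (Delta a d e) * Real.sqrt (Delta b c e) := by
    rw [hf]; field_simp; ring
  have hsq : Delta a b f = (((d + a * e) * Real.sqrt (Delta b c e)
      + (c + b * e) * Real.sqrt (Delta a d e)) / (e ^ 2 - 1)) ^ 2 := by
    rw [div_pow, eq_div_iff (pow_ne_zero 2 hk)]
    exact Delta_mul_sq_eq_of_flip (Real.sq_sqrt hade) (Real.sq_sqrt hbce) hf'
  exact ⟨hsq, by rw [hsq, Real.sqrt_sq hpos]⟩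
end

section
/- With the same hypotheses, √(Δ_{cdf}) = ((a + de)√(Δ_{bce}) + (b + ce)√(Δ_{ade}))/(e² − 1), assuming the right-hand side is nonnegative; i.e. Δ_{cdf} equals the square of the right-hand side. -/
theorem delta_mul_sq_eq_sq {a b c d e f P Q : ℝ}
    (hP : P ^ 2 = Delta a d e) (hQ : Q ^ 2 = Delta b c e)
    (hf : f * (e ^ 2 - 1) = a * b + c * d + a * c * e + b * d * e + P * Q) :
    Delta c d f * (e ^ 2 - 1) ^ 2 = ((a + d * e) * Q + (b + c * e) * P) ^ 2 := by
  simp only [Delta] at hP hQ ⊢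
  -- With `F := f (e² - 1)` and `G` its value, the `f²` and `2cdf` terms of `Delta c d f` contribute
  -- `F² - G² = (F + G)(F - G)` and `2cd(e² - 1)(F - G)`; the rest is `P²`, `Q²` reduction.
  linear_combination (f * (e ^ 2 - 1) + (a * b + c * d + a * c * e + b * d * e + P * Q)
      + 2 * c * d * (e ^ 2 - 1)) * hf
    + (Q ^ 2 - (b + c * e) ^ 2) * hP + ((e ^ 2 - 1) * (1 - d ^ 2)) * hQ

theorem sqrt_delta_cdf (a b c d e f : ℝ) (he : 1 < e)
    (hade : 0 ≤ Delta a d e) (hbce : 0 ≤ Delta b c e)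
    (hf : f = (a * b + c * d + a * c * e + b * d * e +
      Real.sqrt (Delta a d e) * Real.sqrt (Delta b c e)) / (e ^ 2 - 1))
    (hpos : 0 ≤ ((a + d * e) * Real.sqrt (Delta b c e)
      + (b + c * e) * Real.sqrt (Delta a d e)) / (e ^ 2 - 1)) :
    Delta c d f = (((a + d * e) * Real.sqrt (Delta b c e)
      + (b + c * e) * Real.sqrt (Delta a d e)) / (e ^ 2 - 1)) ^ 2 ∧
    Real.sqrt (Delta c d f) = ((a + d * e) * Real.sqrt (Delta b c e)
      + (b + c * e) * Real.sqrt (Delta a d e)) / (e ^ 2 - 1) := by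
  have he2 : e ^ 2 - 1 ≠ 0 := by nlinarith
  have hsq : Delta c d f = (((a + d * e) * Real.sqrt (Delta b c e)
      + (b + c * e) * Real.sqrt (Delta a d e)) / (e ^ 2 - 1)) ^ 2 := by
    rw [div_pow, eq_div_iff (pow_ne_zero 2 he2)]
    refine delta_mul_sq_eq_sq (Real.sq_sqrt hade) (Real.sq_sqrt hbce) ?_
    rw [hf, div_mul_cancel₀ _ he2]
  exact ⟨hsq, by rw [hsq, Real.sqrt_sq hpos]⟩
end

section
/- Let p, q, r > 1 and a, b, c > 1 be real numbers (hyperbolic cosines of radii and inversive distances). Set x = qr + a√(q² − 1)√(r² − 1), y = rp + b√(r² − 1)√(p² − 1), z = pq + c√(p² − 1)√(q² − 1), and Ξ = p²(1 − x²) + q²(1 − y²) + r²(1 − z²) + 2pq(xy − z) + 2pr(xz − y) + 2qr(yz − x). Then 1 + 2xyz − x² − y² − z² − Ξ = (p² − 1)(q² − 1)(r² − 1)(a² + b² + c² + 2abc − 1). -/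
/-!
Let `A = !![1, z, y; z, 1, x; y, x, 1]` and `v = (p, q, r)`. Then `1 + 2xyz - x² - y² - z² = det A`
and `Ξ = vᵀ (adj A) v`, so by the matrix determinant lemma the left-hand side is `det (A - v vᵀ)`.
With `P = √(p² - 1)`, `Q = √(q² - 1)`, `R = √(r² - 1)` the definitions of `x`, `y`, `z` say exactly
that `A - v vᵀ = S C S` for `S = diag (P, Q, R)` and `C = !![-1, c, b; c, -1, a; b, a, -1]`, whose
determinant is `a² + b² + c² + 2abc - 1`.
-/

open Matrix

theorem Matrix.det_sub_vecMulVec_fin_three {K : Type*} [CommRing K]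
    (A : Matrix (Fin 3) (Fin 3) K) (u v : Fin 3 → K) :
    (A - vecMulVec u v).det = A.det - v ⬝ᵥ A.adjugate *ᵥ u := by
  rw [det_fin_three, det_fin_three, adjugate_fin_three]
  simp only [Fin.isValue, sub_apply, vecMulVec_apply, dotProduct, mulVec, of_apply, cons_val',
    cons_val_fin_one, Fin.sum_univ_three, cons_val_zero, cons_val_one, cons_val]
  ring

theorem Matrix.det_diagonal_mul_mul_diagonal {n K : Type*} [Fintype n] [DecidableEq n]
    [CommRing K] (d : n → K) (C : Matrix n n K) :
    (diagonal d * C * diagonal d).det = (∏ i, d i) ^ 2 * C.det := by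
  rw [det_mul, det_mul, det_diagonal]
  ring

section InversiveDistance

variable {K : Type*} [CommRing K]

def cosineMatrix (x y z : K) : Matrix (Fin 3) (Fin 3) K :=
  !![1, z, y; z, 1, x; y, x, 1]

def inversiveMatrix (a b c : K) : Matrix (Fin 3) (Fin 3) K :=
  !![-1, c, b; c, -1, a; b, a, -1]

theorem det_cosineMatrix (x y z : K) :
    (cosineMatrix x y z).det = 1 + 2 * x * y * z - x ^ 2 - y ^ 2 - z ^ 2 := by
  rw [cosineMatrix, det_fin_three]
  simp only [Fin.isValue, of_apply, cons_val', cons_val_zero, cons_val_fin_one, cons_val_one,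
    cons_val]
  ring

theorem dotProduct_adjugate_cosineMatrix_mulVec (x y z p q r : K) :
    ![p, q, r] ⬝ᵥ (cosineMatrix x y z).adjugate *ᵥ ![p, q, r]
      = p ^ 2 * (1 - x ^ 2) + q ^ 2 * (1 - y ^ 2) + r ^ 2 * (1 - z ^ 2)
        + 2 * p * q * (x * y - z) + 2 * p * r * (x * z - y) + 2 * q * r * (y * z - x) := by
  rw [cosineMatrix, adjugate_fin_three]
  simp only [dotProduct, mulVec, Fin.isValue, of_apply, cons_val', cons_val_one, cons_val_zero,
    cons_val_fin_one, cons_val, Fin.sum_univ_three]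
  ring

theorem det_inversiveMatrix (a b c : K) :
    (inversiveMatrix a b c).det = a ^ 2 + b ^ 2 + c ^ 2 + 2 * a * b * c - 1 := by
  rw [inversiveMatrix, det_fin_three]
  simp only [Fin.isValue, of_apply, cons_val', cons_val_zero, cons_val_fin_one, cons_val_one,
    cons_val]
  ring

theorem cosineMatrix_sub_vecMulVec {p q r a b c x y z P Q R : K}
    (hP : P ^ 2 = p ^ 2 - 1) (hQ : Q ^ 2 = q ^ 2 - 1) (hR : R ^ 2 = r ^ 2 - 1)
    (hx : x = q * r + a * Q * R) (hy : y = r * p + b * R * P) (hz : z = p * q + c * P * Q) :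
    cosineMatrix x y z - vecMulVec ![p, q, r] ![p, q, r]
      = diagonal ![P, Q, R] * inversiveMatrix a b c * diagonal ![P, Q, R] := by
  subst hx hy hz
  ext i j
  fin_cases i <;> fin_cases j <;>
    simp [cosineMatrix, inversiveMatrix] <;> grind

end InversiveDistance

theorem xi_delta_identity_general (p q r a b c : ℝ)
    (hp : 1 < p) (hq : 1 < q) (hr : 1 < r)
    (x y z Xi : ℝ)
    (hx : x = q * r + a * Real.sqrt (q ^ 2 - 1) * Real.sqrt (r ^ 2 - 1))
    (hy : y = r * p + b * Real.sqrt (r ^ 2 - 1) * Real.sqrt (p ^ 2 - 1))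
    (hz : z = p * q + c * Real.sqrt (p ^ 2 - 1) * Real.sqrt (q ^ 2 - 1))
    (hXi : Xi = p ^ 2 * (1 - x ^ 2) + q ^ 2 * (1 - y ^ 2) + r ^ 2 * (1 - z ^ 2)
      + 2 * p * q * (x * y - z) + 2 * p * r * (x * z - y) + 2 * q * r * (y * z - x)) :
    1 + 2 * x * y * z - x ^ 2 - y ^ 2 - z ^ 2 - Xi
      = (p ^ 2 - 1) * (q ^ 2 - 1) * (r ^ 2 - 1)
        * (a ^ 2 + b ^ 2 + c ^ 2 + 2 * a * b * c - 1) := by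
  have sq_sqrt_of_one_lt {t : ℝ} (ht : 1 < t) : Real.sqrt (t ^ 2 - 1) ^ 2 = t ^ 2 - 1 :=
    Real.sq_sqrt (by nlinarith)
  have hfactor := cosineMatrix_sub_vecMulVec (sq_sqrt_of_one_lt hp) (sq_sqrt_of_one_lt hq)
    (sq_sqrt_of_one_lt hr) hx hy hz
  rw [hXi, ← det_cosineMatrix, ← dotProduct_adjugate_cosineMatrix_mulVec,
    ← det_sub_vecMulVec_fin_three, hfactor, det_diagonal_mul_mul_diagonal, det_inversiveMatrix,
    Fin.prod_univ_three]
  simp only [Fin.isValue, cons_val_zero, cons_val_one, cons_val, mul_pow,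
    sq_sqrt_of_one_lt hp, sq_sqrt_of_one_lt hq, sq_sqrt_of_one_lt hr]

theorem xi_delta_identity (p q r a b c : ℝ)
    (hp : 1 < p) (hq : 1 < q) (hr : 1 < r)
    (ha : 1 < a) (hb : 1 < b) (hc : 1 < c)
    (x y z Xi : ℝ)
    (hx : x = q * r + a * Real.sqrt (q ^ 2 - 1) * Real.sqrt (r ^ 2 - 1))
    (hy : y = r * p + b * Real.sqrt (r ^ 2 - 1) * Real.sqrt (p ^ 2 - 1))
    (hz : z = p * q + c * Real.sqrt (p ^ 2 - 1) * Real.sqrt (q ^ 2 - 1))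
    (hXi : Xi = p ^ 2 * (1 - x ^ 2) + q ^ 2 * (1 - y ^ 2) + r ^ 2 * (1 - z ^ 2)
      + 2 * p * q * (x * y - z) + 2 * p * r * (x * z - y) + 2 * q * r * (y * z - x)) :
    1 + 2 * x * y * z - x ^ 2 - y ^ 2 - z ^ 2 - Xi
      = (p ^ 2 - 1) * (q ^ 2 - 1) * (r ^ 2 - 1)
        * (a ^ 2 + b ^ 2 + c ^ 2 + 2 * a * b * c - 1) :=
  xi_delta_identity_general p q r a b c hp hq hr x y z Xi hx hy hz hXi
end

section
/- Let p̂, q̂, r̂ ∈ (0,1) and a, b, c > 1. Set p = (1 − p̂²)^{−1/2}, q = (1 − q̂²)^{−1/2}, r = (1 − r̂²)^{−1/2}, and x = qr + a√(q² − 1)√(r² − 1), y = rp + b√(r² − 1)√(p² − 1), z = pq + c√(p² − 1)√(q² − 1). Let Ξ = p²(1 − x²) + q²(1 − y²) + r²(1 − z²) + 2pq(xy − z) + 2pr(xz − y) + 2qr(yz − x). Then (1 − p̂²)(1 − q̂²)(1 − r̂²)·Ξ = (1 − c²)p̂²q̂² + (1 − b²)p̂²r̂² + (1 − a²)q̂²r̂²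 + 2((a + bc)p̂ + (b + ac)q̂ + (c + ab)r̂)·p̂q̂r̂. -/
/-!
Write `p = 1/u`, `q = 1/v`, `r = 1/w` with `u = √(1 - p̂²)`, etc. (so `p = cosh`, `u = sech`,
`√(p² - 1) = p̂ / u = sinh`). Then `x = (1 + a q̂ r̂) / (v w)` and cyclically, and `Ξ` is a
quadratic form in `(p, q, r)` whose coefficients are quadratic in `(x, y, z)`; clearing the
denominators `u² v² w²` turns it into a polynomial in `u², v², w², p̂, q̂, r̂`, and substituting
`u² = 1 - p̂²` etc. gives the right-hand side.
-/

open Real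

/-- The quadratic form of the adjugate of `!![1, z, y; z, 1, x; y, x, 1]`, evaluated at
`(p, q, r)`. -/
def xiForm (p q r x y z : ℝ) : ℝ :=
  p ^ 2 * (1 - x ^ 2) + q ^ 2 * (1 - y ^ 2) + r ^ 2 * (1 - z ^ 2)
    + 2 * p * q * (x * y - z) + 2 * p * r * (x * z - y) + 2 * q * r * (y * z - x)

lemma sq_mul_xiForm_inv {u v w : ℝ} (hu : u ≠ 0) (hv : v ≠ 0) (hw : w ≠ 0) (X Y Z : ℝ) :
    u ^ 2 * v ^ 2 * w ^ 2 * xiForm u⁻¹ v⁻¹ w⁻¹ (X / (v * w)) (Y / (w * u)) (Z / (u * v))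
      = v ^ 2 * w ^ 2 + w ^ 2 * u ^ 2 + u ^ 2 * v ^ 2 - X ^ 2 - Y ^ 2 - Z ^ 2
        + 2 * (X * Y + Y * Z + Z * X) - 2 * (u ^ 2 * X + v ^ 2 * Y + w ^ 2 * Z) := by
  unfold xiForm
  field_simp
  ring

lemma rpow_neg_half_eq_inv_sqrt {s : ℝ} (hs : 0 ≤ s) : s ^ (-(1 : ℝ) / 2) = (√s)⁻¹ := by
  rw [sqrt_eq_rpow, ← rpow_neg hs]
  norm_num

lemma exists_sech_of_eq_rpow_neg_half {t p : ℝ} (ht₀ : 0 ≤ t) (ht₁ : t < 1)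
    (hp : p = (1 - t ^ 2) ^ (-(1 : ℝ) / 2)) :
    ∃ u : ℝ, 0 < u ∧ u ^ 2 = 1 - t ^ 2 ∧ p = u⁻¹ ∧ √(p ^ 2 - 1) = t / u := by
  have hs : 0 < 1 - t ^ 2 := by nlinarith
  have hu : 0 < √(1 - t ^ 2) := sqrt_pos.mpr hs
  have hu2 : √(1 - t ^ 2) ^ 2 = 1 - t ^ 2 := sq_sqrt hs.le
  refine ⟨√(1 - t ^ 2), hu, hu2, hp ▸ rpow_neg_half_eq_inv_sqrt hs.le, ?_⟩
  have hsinh : p ^ 2 - 1 = (t / √(1 - t ^ 2)) ^ 2 := by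
    rw [hp, rpow_neg_half_eq_inv_sqrt hs.le]
    field_simp
    linarith
  rw [hsinh, sqrt_sq (by positivity)]

theorem xi_tanh_identity_general (p' q' r' a b c : ℝ)
    (hp' : p' ∈ Set.Ioo (0 : ℝ) 1) (hq' : q' ∈ Set.Ioo (0 : ℝ) 1)
    (hr' : r' ∈ Set.Ioo (0 : ℝ) 1)
    (p q r x y z Xi : ℝ)
    (hp : p = (1 - p' ^ 2) ^ (-(1 : ℝ) / 2))
    (hq : q = (1 - q' ^ 2) ^ (-(1 : ℝ) / 2))
    (hr : r = (1 - r' ^ 2) ^ (-(1 : ℝ) / 2))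
    (hx : x = q * r + a * Real.sqrt (q ^ 2 - 1) * Real.sqrt (r ^ 2 - 1))
    (hy : y = r * p + b * Real.sqrt (r ^ 2 - 1) * Real.sqrt (p ^ 2 - 1))
    (hz : z = p * q + c * Real.sqrt (p ^ 2 - 1) * Real.sqrt (q ^ 2 - 1))
    (hXi : Xi = p ^ 2 * (1 - x ^ 2) + q ^ 2 * (1 - y ^ 2) + r ^ 2 * (1 - z ^ 2)
      + 2 * p * q * (x * y - z) + 2 * p * r * (x * z - y) + 2 * q * r * (y * z - x)) :
    (1 - p' ^ 2) * (1 - q' ^ 2) * (1 - r' ^ 2) * Xi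
      = (1 - c ^ 2) * p' ^ 2 * q' ^ 2 + (1 - b ^ 2) * p' ^ 2 * r' ^ 2
        + (1 - a ^ 2) * q' ^ 2 * r' ^ 2
        + 2 * ((a + b * c) * p' + (b + a * c) * q' + (c + a * b) * r')
          * (p' * q' * r') := by
  obtain ⟨u, hu, hu2, rfl, hsp⟩ := exists_sech_of_eq_rpow_neg_half hp'.1.le hp'.2 hp
  obtain ⟨v, hv, hv2, rfl, hsq⟩ := exists_sech_of_eq_rpow_neg_half hq'.1.le hq'.2 hq
  obtain ⟨w, hw, hw2, rfl, hsr⟩ := exists_sech_of_eq_rpow_neg_half hr'.1.le hr'.2 hr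
  have hxX : x = (1 + a * q' * r') / (v * w) := by rw [hx, hsq, hsr]; field_simp
  have hyY : y = (1 + b * r' * p') / (w * u) := by rw [hy, hsr, hsp]; field_simp
  have hzZ : z = (1 + c * p' * q') / (u * v) := by rw [hz, hsp, hsq]; field_simp
  have hXi' : Xi = xiForm u⁻¹ v⁻¹ w⁻¹ x y z := hXi
  rw [← hu2, ← hv2, ← hw2, hXi', hxX, hyY, hzZ, sq_mul_xiForm_inv hu.ne' hv.ne' hw.ne',
    hu2, hv2, hw2]
  ring

theorem xi_tanh_identity (p' q' r' a b c : ℝ)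
    (hp' : p' ∈ Set.Ioo (0 : ℝ) 1) (hq' : q' ∈ Set.Ioo (0 : ℝ) 1)
    (hr' : r' ∈ Set.Ioo (0 : ℝ) 1)
    (ha : 1 < a) (hb : 1 < b) (hc : 1 < c)
    (p q r x y z Xi : ℝ)
    (hp : p = (1 - p' ^ 2) ^ (-(1 : ℝ) / 2))
    (hq : q = (1 - q' ^ 2) ^ (-(1 : ℝ) / 2))
    (hr : r = (1 - r' ^ 2) ^ (-(1 : ℝ) / 2))
    (hx : x = q * r + a * Real.sqrt (q ^ 2 - 1) * Real.sqrt (r ^ 2 - 1))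
    (hy : y = r * p + b * Real.sqrt (r ^ 2 - 1) * Real.sqrt (p ^ 2 - 1))
    (hz : z = p * q + c * Real.sqrt (p ^ 2 - 1) * Real.sqrt (q ^ 2 - 1))
    (hXi : Xi = p ^ 2 * (1 - x ^ 2) + q ^ 2 * (1 - y ^ 2) + r ^ 2 * (1 - z ^ 2)
      + 2 * p * q * (x * y - z) + 2 * p * r * (x * z - y) + 2 * q * r * (y * z - x)) :
    (1 - p' ^ 2) * (1 - q' ^ 2) * (1 - r' ^ 2) * Xi
      = (1 - c ^ 2) * p' ^ 2 * q' ^ 2 + (1 - b ^ 2) * p' ^ 2 * r' ^ 2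
        + (1 - a ^ 2) * q' ^ 2 * r' ^ 2
        + 2 * ((a + b * c) * p' + (b + a * c) * q' + (c + a * b) * r')
          * (p' * q' * r') :=
  xi_tanh_identity_general p' q' r' a b c hp' hq' hr' p q r x y z Xi hp hq hr hx hy hz hXi
end

section
/- Under the hypotheses p, q, r > 1, a, b, c > 1 and Ξ > 0 (with x, y, z, Ξ defined as before), the quantities satisfy the hyperbolic triangle inequalities: letting X = arccosh x, Y = arccosh y, Z = arccosh z, we have X < Y + Z, Y < X + Z, and Z < X + Y. -/
/-!
By the addition formula for `cosh`, `arcosh x < arcosh y + arcosh z` as soon as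
`x < y z + √(y² - 1) √(z² - 1)`, and since
`1 + 2xyz - x² - y² - z² = (y² - 1)(z² - 1) - (x - yz)²`, this holds whenever the symmetric
Gram determinant `1 + 2xyz - x² - y² - z²` is positive. For the edge lengths of the packing this
determinant equals `Ξ + (a² + b² + c² + 2abc - 1)(p² - 1)(q² - 1)(r² - 1)`, a sum of two
positive terms.
-/

/-- The inverse of `Real.cosh` on `[1, ∞)`. -/
noncomputable def arcosh (t : ℝ) : ℝ := Real.log (t + Real.sqrt (t ^ 2 - 1))

theorem lt_mul_add_sqrt_mul_sqrt_of_gram_pos {x y z : ℝ} (hy : 1 ≤ y) (hz : 1 ≤ z)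
    (h : 0 < 1 + 2 * x * y * z - x ^ 2 - y ^ 2 - z ^ 2) :
    x < y * z + √(y ^ 2 - 1) * √(z ^ 2 - 1) := by
  have hy2 : 0 ≤ y ^ 2 - 1 := by nlinarith
  have hz2 : 0 ≤ z ^ 2 - 1 := by nlinarith
  have hsq : (x - y * z) ^ 2 < (√(y ^ 2 - 1) * √(z ^ 2 - 1)) ^ 2 := by
    rw [mul_pow, Real.sq_sqrt hy2, Real.sq_sqrt hz2]
    linarith
  linarith [lt_of_pow_lt_pow_left₀ 2 (by positivity) hsq]

theorem arcosh_lt_arcosh_add_arcosh_of_gram_pos {x y z : ℝ} (hx : 0 < x) (hy : 1 ≤ y)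
    (hz : 1 ≤ z) (h : 0 < 1 + 2 * x * y * z - x ^ 2 - y ^ 2 - z ^ 2) :
    arcosh x < arcosh y + arcosh z := by
  show Real.arcosh x < Real.arcosh y + Real.arcosh z
  have hlt := lt_mul_add_sqrt_mul_sqrt_of_gram_pos hy hz h
  have hcosh : Real.cosh (Real.arcosh y + Real.arcosh z)
      = y * z + √(y ^ 2 - 1) * √(z ^ 2 - 1) := by
    rw [Real.cosh_add, Real.cosh_arcosh hy, Real.cosh_arcosh hz, Real.sinh_arcosh hy,
      Real.sinh_arcosh hz]
  rw [← Real.arcosh_cosh (add_nonneg (Real.arcosh_nonneg hy) (Real.arcosh_nonneg hz)), hcosh]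
  exact (Real.arcosh_lt_arcosh hx (hx.trans hlt)).2 hlt

theorem one_lt_mul_add_mul_sqrt_mul_sqrt {q r a : ℝ} (hq : 1 < q) (hr : 1 < r) (ha : 0 < a) :
    1 < q * r + a * √(q ^ 2 - 1) * √(r ^ 2 - 1) := by
  have : 0 ≤ a * √(q ^ 2 - 1) * √(r ^ 2 - 1) := by positivity
  linarith [one_lt_mul_of_lt_of_le hq hr.le]

theorem gram_eq_xi_add {p q r a b c sp sq sr x y z : ℝ}
    (hsp : sp ^ 2 = p ^ 2 - 1) (hsq : sq ^ 2 = q ^ 2 - 1) (hsr : sr ^ 2 = r ^ 2 - 1)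
    (hx : x = q * r + a * sq * sr) (hy : y = r * p + b * sr * sp) (hz : z = p * q + c * sp * sq) :
    1 + 2 * x * y * z - x ^ 2 - y ^ 2 - z ^ 2
      = p ^ 2 * (1 - x ^ 2) + q ^ 2 * (1 - y ^ 2) + r ^ 2 * (1 - z ^ 2)
        + 2 * p * q * (x * y - z) + 2 * p * r * (x * z - y) + 2 * q * r * (y * z - x)
        + (a ^ 2 + b ^ 2 + c ^ 2 + 2 * a * b * c - 1) * ((p ^ 2 - 1) * (q ^ 2 - 1) * (r ^ 2 - 1)) := by
  subst hx hy hz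
  linear_combination
      (-(c ^ 2 * sq ^ 2) - b ^ 2 * sr ^ 2 + 2 * a * b * c * sq ^ 2 * sr ^ 2
        + r ^ 2 * c ^ 2 * sq ^ 2 + q ^ 2 * b ^ 2 * sr ^ 2) * hsp
      + (c ^ 2 - 2 * a * b * c * sr ^ 2 - a ^ 2 * sr ^ 2 - r ^ 2 * c ^ 2 - p ^ 2 * c ^ 2
        + 2 * p ^ 2 * a * b * c * sr ^ 2 + p ^ 2 * a ^ 2 * sr ^ 2 + p ^ 2 * r ^ 2 * c ^ 2) * hsq
      + (b ^ 2 + 2 * a * b * c + a ^ 2 - q ^ 2 * b ^ 2 - 2 * q ^ 2 * a * b * c - q ^ 2 * a ^ 2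
        - p ^ 2 * b ^ 2 - 2 * p ^ 2 * a * b * c - p ^ 2 * a ^ 2 + p ^ 2 * q ^ 2 * b ^ 2
        + 2 * p ^ 2 * q ^ 2 * a * b * c + p ^ 2 * q ^ 2 * a ^ 2) * hsr

theorem xi_pos_triangle_ineq (p q r a b c : ℝ)
    (hp : 1 < p) (hq : 1 < q) (hr : 1 < r)
    (ha : 1 < a) (hb : 1 < b) (hc : 1 < c)
    (x y z Xi : ℝ)
    (hx : x = q * r + a * Real.sqrt (q ^ 2 - 1) * Real.sqrt (r ^ 2 - 1))
    (hy : y = r * p + b * Real.sqrt (r ^ 2 - 1) * Real.sqrt (p ^ 2 - 1))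
    (hz : z = p * q + c * Real.sqrt (p ^ 2 - 1) * Real.sqrt (q ^ 2 - 1))
    (hXi : Xi = p ^ 2 * (1 - x ^ 2) + q ^ 2 * (1 - y ^ 2) + r ^ 2 * (1 - z ^ 2)
      + 2 * p * q * (x * y - z) + 2 * p * r * (x * z - y) + 2 * q * r * (y * z - x))
    (hXipos : 0 < Xi) :
    arcosh x < arcosh y + arcosh z ∧
    arcosh y < arcosh x + arcosh z ∧
    arcosh z < arcosh x + arcosh y := by
  have hx1 : 1 < x := hx ▸ one_lt_mul_add_mul_sqrt_mul_sqrt hq hr (by linarith)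
  have hy1 : 1 < y := hy ▸ one_lt_mul_add_mul_sqrt_mul_sqrt hr hp (by linarith)
  have hz1 : 1 < z := hz ▸ one_lt_mul_add_mul_sqrt_mul_sqrt hp hq (by linarith)
  have hsub {t : ℝ} (ht : 1 < t) : 0 < t ^ 2 - 1 := by nlinarith
  have hsq {t : ℝ} (ht : 1 < t) : √(t ^ 2 - 1) ^ 2 = t ^ 2 - 1 := Real.sq_sqrt (hsub ht).le
  have habc : 0 < a ^ 2 + b ^ 2 + c ^ 2 + 2 * a * b * c - 1 := by
    nlinarith [mul_pos (mul_pos (one_pos.trans ha) (one_pos.trans hb)) (one_pos.trans hc)]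
  have hgram : 0 < 1 + 2 * x * y * z - x ^ 2 - y ^ 2 - z ^ 2 := by
    rw [gram_eq_xi_add (hsq hp) (hsq hq) (hsq hr) hx hy hz, ← hXi]
    exact add_pos hXipos (mul_pos habc (mul_pos (mul_pos (hsub hp) (hsub hq)) (hsub hr)))
  refine ⟨arcosh_lt_arcosh_add_arcosh_of_gram_pos (by linarith) hy1.le hz1.le hgram,
    arcosh_lt_arcosh_add_arcosh_of_gram_pos (by linarith) hx1.le hz1.le (by linarith),
    arcosh_lt_arcosh_add_arcosh_of_gram_pos (by linarith) hx1.le hy1.le (by linarith)⟩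
end

section
/- Let p, q, r > 1, a, b, c > 1 with Δ_{abc} = a² + b² + c² + 2abc − 1, and x, y, z, Ξ defined as before with Ξ > 0. Then 1 + 2xyz − x² − y² − z² > 0, and the number ρ defined by cosh²ρ = (1 + 2xyz − x² − y² − z²)/Ξ satisfies sinh²ρ = (p² − 1)(q² − 1)(r² − 1)·Δ_{abc}/Ξ. -/
/-! With `P = √(p² − 1)`, `Q = √(q² − 1)`, `R = √(r² − 1)`, the Gram-type determinant
`1 + 2xyz − x² − y² − z²` exceeds `Ξ` by exactly `P²Q²R²·Δ_{abc}`, a polynomial identity once the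
squares of the roots are rewritten. Since `Δ_{abc} > 0` the determinant is positive, and
`sinh²ρ = cosh²ρ − 1` turns the identity into the formula for `sinh²ρ`. -/

theorem gram_sub_xi_eq (p q r a b c P Q R x y z Xi : ℝ)
    (hP : P ^ 2 = p ^ 2 - 1) (hQ : Q ^ 2 = q ^ 2 - 1) (hR : R ^ 2 = r ^ 2 - 1)
    (hx : x = q * r + a * Q * R) (hy : y = r * p + b * R * P) (hz : z = p * q + c * P * Q)
    (hXi : Xi = p ^ 2 * (1 - x ^ 2) + q ^ 2 * (1 - y ^ 2) + r ^ 2 * (1 - z ^ 2)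
      + 2 * p * q * (x * y - z) + 2 * p * r * (x * z - y) + 2 * q * r * (y * z - x)) :
    1 + 2 * x * y * z - x ^ 2 - y ^ 2 - z ^ 2 - Xi
      = (p ^ 2 - 1) * (q ^ 2 - 1) * (r ^ 2 - 1) * (a ^ 2 + b ^ 2 + c ^ 2 + 2 * a * b * c - 1) := by
  subst hx hy hz hXi
  linear_combination
    (-c^2*Q^2 - b^2*R^2 + 2*a*b*c*Q^2*R^2 + r^2*c^2*Q^2 + q^2*b^2*R^2) * hP
    + (c^2 - 2*a*b*c*R^2 - a^2*R^2 - r^2*c^2 - p^2*c^2 + 2*p^2*a*b*c*R^2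
      + p^2*a^2*R^2 + p^2*r^2*c^2) * hQ
    + (b^2 + 2*a*b*c + a^2 - q^2*b^2 - 2*q^2*a*b*c - q^2*a^2 - p^2*b^2
      - 2*p^2*a*b*c - p^2*a^2 + p^2*q^2*b^2 + 2*p^2*q^2*a*b*c + p^2*q^2*a^2) * hR

theorem delta_abc_pos {a b c : ℝ} (ha : 1 < a) (hb : 0 ≤ b) (hc : 0 ≤ c) :
    0 < a ^ 2 + b ^ 2 + c ^ 2 + 2 * a * b * c - 1 := by
  have : 0 ≤ a * b * c := by positivity
  nlinarith [sq_nonneg b, sq_nonneg c]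

theorem sinh_sq_eq_of_cosh_sq_eq_div {ρ N D : ℝ} (hD : D ≠ 0) (h : Real.cosh ρ ^ 2 = N / D) :
    Real.sinh ρ ^ 2 = (N - D) / D := by
  rw [Real.sinh_sq, h, div_sub_one hD]

theorem orthogonal_circle_radius (p q r a b c : ℝ)
    (hp : 1 < p) (hq : 1 < q) (hr : 1 < r)
    (ha : 1 < a) (hb : 1 < b) (hc : 1 < c)
    (x y z Xi ρ : ℝ)
    (hx : x = q * r + a * Real.sqrt (q ^ 2 - 1) * Real.sqrt (r ^ 2 - 1))
    (hy : y = r * p + b * Real.sqrt (r ^ 2 - 1) * Real.sqrt (p ^ 2 - 1))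
    (hz : z = p * q + c * Real.sqrt (p ^ 2 - 1) * Real.sqrt (q ^ 2 - 1))
    (hXi : Xi = p ^ 2 * (1 - x ^ 2) + q ^ 2 * (1 - y ^ 2) + r ^ 2 * (1 - z ^ 2)
      + 2 * p * q * (x * y - z) + 2 * p * r * (x * z - y) + 2 * q * r * (y * z - x))
    (hXipos : 0 < Xi)
    (hρ : Real.cosh ρ ^ 2 = (1 + 2 * x * y * z - x ^ 2 - y ^ 2 - z ^ 2) / Xi) :
    0 < 1 + 2 * x * y * z - x ^ 2 - y ^ 2 - z ^ 2 ∧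
    Real.sinh ρ ^ 2 = (p ^ 2 - 1) * (q ^ 2 - 1) * (r ^ 2 - 1)
      * (a ^ 2 + b ^ 2 + c ^ 2 + 2 * a * b * c - 1) / Xi := by
  have hp2 : 0 < p ^ 2 - 1 := by nlinarith
  have hq2 : 0 < q ^ 2 - 1 := by nlinarith
  have hr2 : 0 < r ^ 2 - 1 := by nlinarith
  have key := gram_sub_xi_eq p q r a b c _ _ _ x y z Xi
    (Real.sq_sqrt hp2.le) (Real.sq_sqrt hq2.le) (Real.sq_sqrt hr2.le) hx hy hz hXi
  have hprod : 0 < (p ^ 2 - 1) * (q ^ 2 - 1) * (r ^ 2 - 1)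
      * (a ^ 2 + b ^ 2 + c ^ 2 + 2 * a * b * c - 1) :=
    mul_pos (mul_pos (mul_pos hp2 hq2) hr2) (delta_abc_pos ha (by linarith) (by linarith))
  refine ⟨by linarith, ?_⟩
  rw [sinh_sq_eq_of_cosh_sq_eq_div hXipos.ne' hρ, key]
end

section
/- Let q̂, ŝ ∈ (0,1) and a, d, e > 1 with Δ_{ade} = a² + d² + e² + 2ade − 1 > 0. Define Ĝ(p̂) = p̂² + (a q̂ + d ŝ)p̂ − e q̂ ŝ + √(p̂² + 2a p̂ q̂ + q̂²)·√(p̂² + 2d p̂ ŝ + ŝ²) for p̂ > 0. Then Ĝ is strictly increasing on (0, ∞) and has a unique zero at p̂₀ = (e² − 1) q̂ ŝ / (√(q̂² + ŝ² + 2e q̂ ŝ)·√(Δ_{ade}) + (ae + d)q̂ + (de + a)ŝ). -/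
/-!
Write `A = p² + 2apq + q²`, `B = p² + 2dps + s²` and `R = eqs - p² - (aq + ds)p`, so that
`Ĝ = √A √B - R`. Every term of `Ĝ` is monotone in `p > 0`, and `p²` strictly so; this gives
monotonicity, hence uniqueness of the zero.

In `A B - R²` the quartic and cubic terms cancel, and `(e² - 1)(A B - R²)` is the difference of
squares `T Δ p² - ((e² - 1)qs - L p)²` with `T = q² + 2eqs + s²` and `L = (ae + d)q + (de + a)s`.
The point `p₀` is exactly where `(e² - 1)qs - L p = √(T Δ) p`, so `A B = R²` at `p₀` and
`A B ≤ R²` on `[0, p₀]`. Since `A B > 0` there, `R` keeps the sign of `R 0 = eqs > 0`, so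
`√A √B = R` at `p₀`.
-/

open Real Set

def lawOfCosinesSq (a p q : ℝ) : ℝ := p ^ 2 + 2 * a * p * q + q ^ 2

lemma lawOfCosinesSq_pos {a p q : ℝ} (ha : 0 ≤ a) (hp : 0 ≤ p) (hq : 0 < q) :
    0 < lawOfCosinesSq a p q := by
  unfold lawOfCosinesSq; positivity

lemma strictMonoOn_hinge {a d q s : ℝ} (ha : 0 ≤ a) (hd : 0 ≤ d) (hq : 0 ≤ q) (hs : 0 ≤ s)
    (k : ℝ) :
    StrictMonoOn (fun p ↦ p ^ 2 + (a * q + d * s) * p - k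
      + √(lawOfCosinesSq a p q) * √(lawOfCosinesSq d p s)) (Ioi 0) := by
  intro x (hx : 0 < x) y _ hxy
  have hpoly : x ^ 2 + (a * q + d * s) * x < y ^ 2 + (a * q + d * s) * y := by
    apply add_lt_add_of_lt_of_le <;> gcongr
  have hroots : √(lawOfCosinesSq a x q) * √(lawOfCosinesSq d x s)
      ≤ √(lawOfCosinesSq a y q) * √(lawOfCosinesSq d y s) := by
    unfold lawOfCosinesSq; gcongr
  dsimp only
  linarith

lemma sq_sub_one_mul_lawOfCosinesSq_mul_sub_sq (a d e q s p : ℝ) :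
    (e ^ 2 - 1) * (lawOfCosinesSq a p q * lawOfCosinesSq d p s
      - (e * q * s - p ^ 2 - (a * q + d * s) * p) ^ 2)
    = lawOfCosinesSq e q s * (a ^ 2 + d ^ 2 + e ^ 2 + 2 * a * d * e - 1) * p ^ 2
      - ((e ^ 2 - 1) * q * s - ((a * e + d) * q + (d * e + a) * s) * p) ^ 2 := by
  unfold lawOfCosinesSq; ring

section Root

variable {a d e q s X p₀ : ℝ}

lemma lawOfCosinesSq_mul_le_sq (he : 1 < e) (hX : 0 ≤ X)
    (hX2 : X ^ 2 = lawOfCosinesSq e q s * (a ^ 2 + d ^ 2 + e ^ 2 + 2 * a * d * e - 1))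
    (hp₀ : p₀ * (X + (a * e + d) * q + (d * e + a) * s) = (e ^ 2 - 1) * q * s)
    (hL : 0 ≤ (a * e + d) * q + (d * e + a) * s) {p : ℝ} (hp : p ∈ Icc 0 p₀) :
    lawOfCosinesSq a p q * lawOfCosinesSq d p s
      ≤ (e * q * s - p ^ 2 - (a * q + d * s) * p) ^ 2 := by
  have hXp : X * p ≤ (e ^ 2 - 1) * q * s - ((a * e + d) * q + (d * e + a) * s) * p := by
    linarith [mul_le_mul_of_nonneg_left hp.2 hX, mul_le_mul_of_nonneg_left hp.2 hL]
  have hsq := pow_le_pow_left₀ (mul_nonneg hX hp.1) hXp 2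
  have key := sq_sub_one_mul_lawOfCosinesSq_mul_sub_sq a d e q s p
  rw [← hX2, ← mul_pow] at key
  have he2 : 0 < e ^ 2 - 1 := by nlinarith
  exact sub_nonpos.mp (nonpos_of_mul_nonpos_right (key ▸ sub_nonpos.mpr hsq) he2)

lemma lawOfCosinesSq_mul_eq_sq (he : 1 < e)
    (hX2 : X ^ 2 = lawOfCosinesSq e q s * (a ^ 2 + d ^ 2 + e ^ 2 + 2 * a * d * e - 1))
    (hp₀ : p₀ * (X + (a * e + d) * q + (d * e + a) * s) = (e ^ 2 - 1) * q * s) :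
    lawOfCosinesSq a p₀ q * lawOfCosinesSq d p₀ s
      = (e * q * s - p₀ ^ 2 - (a * q + d * s) * p₀) ^ 2 := by
  have key := sq_sub_one_mul_lawOfCosinesSq_mul_sub_sq a d e q s p₀
  rw [← hX2, show (e ^ 2 - 1) * q * s - ((a * e + d) * q + (d * e + a) * s) * p₀ = X * p₀ by
    linarith, mul_pow, sub_self] at key
  have he2 : e ^ 2 - 1 ≠ 0 := by nlinarith
  exact sub_eq_zero.mp ((mul_eq_zero.mp key).resolve_left he2)

lemma residual_pos_of_root (ha : 0 ≤ a) (hd : 0 ≤ d) (he : 1 < e) (hq : 0 < q) (hs : 0 < s)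
    (hX : 0 ≤ X)
    (hX2 : X ^ 2 = lawOfCosinesSq e q s * (a ^ 2 + d ^ 2 + e ^ 2 + 2 * a * d * e - 1))
    (hp₀ : p₀ * (X + (a * e + d) * q + (d * e + a) * s) = (e ^ 2 - 1) * q * s)
    (hp₀_nonneg : 0 ≤ p₀) :
    0 < e * q * s - p₀ ^ 2 - (a * q + d * s) * p₀ := by
  have he0 : 0 ≤ e := by linarith
  by_contra! hneg
  obtain ⟨c, hc, hRc⟩ := intermediate_value_Icc' hp₀_nonneg
    (f := fun p ↦ e * q * s - p ^ 2 - (a * q + d * s) * p) (by fun_prop)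
    ⟨hneg, by ring_nf; positivity⟩
  have hle := lawOfCosinesSq_mul_le_sq he hX hX2 hp₀ (by positivity) hc
  have hpos := mul_pos (lawOfCosinesSq_pos ha hc.1 hq) (lawOfCosinesSq_pos hd hc.1 hs)
  simp only at hRc
  rw [hRc] at hle
  linarith

end Root

theorem G_strictMono_unique_zero (q' s' a d e : ℝ)
    (hq' : q' ∈ Set.Ioo (0 : ℝ) 1) (hs' : s' ∈ Set.Ioo (0 : ℝ) 1)
    (ha : 1 < a) (hd : 1 < d) (he : 1 < e)
    (hade : 0 < a ^ 2 + d ^ 2 + e ^ 2 + 2 * a * d * e - 1)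
    (G : ℝ → ℝ)
    (hG : ∀ p', G p' = p' ^ 2 + (a * q' + d * s') * p' - e * q' * s'
      + Real.sqrt (p' ^ 2 + 2 * a * p' * q' + q' ^ 2)
        * Real.sqrt (p' ^ 2 + 2 * d * p' * s' + s' ^ 2))
    (p₀ : ℝ)
    (hp₀ : p₀ = (e ^ 2 - 1) * q' * s' /
      (Real.sqrt (q' ^ 2 + s' ^ 2 + 2 * e * q' * s')
        * Real.sqrt (a ^ 2 + d ^ 2 + e ^ 2 + 2 * a * d * e - 1)
        + (a * e + d) * q' + (d * e + a) * s')) :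
    StrictMonoOn G (Set.Ioi 0) ∧ G p₀ = 0 ∧
      ∀ p' ∈ Set.Ioi (0 : ℝ), G p' = 0 → p' = p₀ := by
  obtain ⟨hq, -⟩ := hq'
  obtain ⟨hs, -⟩ := hs'
  have ha0 : 0 ≤ a := by linarith
  have hd0 : 0 ≤ d := by linarith
  have he0 : 0 ≤ e := by linarith
  have hG' : ∀ p, G p = p ^ 2 + (a * q' + d * s') * p - e * q' * s'
      + √(lawOfCosinesSq a p q') * √(lawOfCosinesSq d p s') := hG
  have hmono : StrictMonoOn G (Ioi 0) := funext hG' ▸ strictMonoOn_hinge ha0 hd0 hq.le hs.le _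
  rw [show q' ^ 2 + s' ^ 2 + 2 * e * q' * s' = lawOfCosinesSq e q' s' by
    unfold lawOfCosinesSq; ring] at hp₀
  set X := √(lawOfCosinesSq e q' s') * √(a ^ 2 + d ^ 2 + e ^ 2 + 2 * a * d * e - 1)
  have hX2 : X ^ 2 = lawOfCosinesSq e q' s' * (a ^ 2 + d ^ 2 + e ^ 2 + 2 * a * d * e - 1) := by
    rw [mul_pow, sq_sqrt (lawOfCosinesSq_pos he0 hq.le hs).le, sq_sqrt hade.le]
  have hX : 0 ≤ X := by positivity
  have hden : 0 < X + (a * e + d) * q' + (d * e + a) * s' := by positivity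
  have hp₀_mul : p₀ * (X + (a * e + d) * q' + (d * e + a) * s') = (e ^ 2 - 1) * q' * s' :=
    hp₀ ▸ div_mul_cancel₀ _ hden.ne'
  have hp₀_pos : 0 < p₀ := hp₀ ▸ div_pos (mul_pos (mul_pos (by nlinarith) hq) hs) hden
  have hG₀ : G p₀ = 0 := by
    rw [hG', ← sqrt_mul (lawOfCosinesSq_pos ha0 hp₀_pos.le hq).le,
      lawOfCosinesSq_mul_eq_sq he hX2 hp₀_mul,
      sqrt_sq (residual_pos_of_root ha0 hd0 he hq hs hX hX2 hp₀_mul hp₀_pos.le).le]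
    ring
  exact ⟨hmono, hG₀, fun p hp hGp ↦ hmono.injOn hp hp₀_pos (hGp.trans hG₀.symm)⟩
end

section
/- Let b, c, e > 1 with Δ_{bce} = b² + c² + e² + 2bce − 1 > 0, and q̂, ŝ ∈ (0,1). If (b² − 1)q̂² − 2(bc + e)q̂ŝ + (c² − 1)ŝ² ≤ 0, then √(q̂² + ŝ² + 2e q̂ ŝ)·√(Δ_{bce}) ≥ (be + c)q̂ + (ce + b)ŝ. -/
/-!
With `A = q̂² + ŝ² + 2e q̂ ŝ`, `Δ = Δ_{bce}` and `R = (be + c)q̂ + (ce + b)ŝ`, the polynomial identity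
`A Δ - R² = (e² - 1)·(-Q)` holds, where `Q` is the quadratic form of the hypothesis. Since `e > 1`
and `Q ≤ 0`, this gives `R² ≤ A Δ`, and taking square roots finishes the proof.
-/

theorem le_sqrt_mul_sqrt_of_sq_le {x y r : ℝ} (hy : 0 ≤ y) (h : r ^ 2 ≤ x * y) :
    r ≤ √x * √y := by
  rw [← Real.sqrt_mul' x hy]
  exact (le_abs_self r).trans (Real.abs_le_sqrt h)

theorem mul_delta_sub_sq_eq (b c e q s : ℝ) :
    (q ^ 2 + s ^ 2 + 2 * e * q * s) * (b ^ 2 + c ^ 2 + e ^ 2 + 2 * b * c * e - 1)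
      - ((b * e + c) * q + (c * e + b) * s) ^ 2
      = (e ^ 2 - 1) * -((b ^ 2 - 1) * q ^ 2 - 2 * (b * c + e) * q * s + (c ^ 2 - 1) * s ^ 2) := by
  ring

theorem sqrt_delta_lower_bound_general (b c e q' s' : ℝ)
    (he : 1 < e)
    (hbce : 0 < b ^ 2 + c ^ 2 + e ^ 2 + 2 * b * c * e - 1)
    (h : (b ^ 2 - 1) * q' ^ 2 - 2 * (b * c + e) * q' * s'
      + (c ^ 2 - 1) * s' ^ 2 ≤ 0) :
    Real.sqrt (q' ^ 2 + s' ^ 2 + 2 * e * q' * s')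
      * Real.sqrt (b ^ 2 + c ^ 2 + e ^ 2 + 2 * b * c * e - 1)
      ≥ (b * e + c) * q' + (c * e + b) * s' := by
  refine le_sqrt_mul_sqrt_of_sq_le hbce.le (sub_nonneg.1 ?_)
  rw [mul_delta_sub_sq_eq]
  exact mul_nonneg (sub_nonneg.2 (one_le_pow₀ he.le)) (neg_nonneg.2 h)

theorem sqrt_delta_lower_bound (b c e q' s' : ℝ)
    (hb : 1 < b) (hc : 1 < c) (he : 1 < e)
    (hbce : 0 < b ^ 2 + c ^ 2 + e ^ 2 + 2 * b * c * e - 1)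
    (hq' : q' ∈ Set.Ioo (0 : ℝ) 1) (hs' : s' ∈ Set.Ioo (0 : ℝ) 1)
    (h : (b ^ 2 - 1) * q' ^ 2 - 2 * (b * c + e) * q' * s'
      + (c ^ 2 - 1) * s' ^ 2 ≤ 0) :
    Real.sqrt (q' ^ 2 + s' ^ 2 + 2 * e * q' * s')
      * Real.sqrt (b ^ 2 + c ^ 2 + e ^ 2 + 2 * b * c * e - 1)
      ≥ (b * e + c) * q' + (c * e + b) * s' :=
  sqrt_delta_lower_bound_general b c e q' s' he hbce h
end

section
/- Let u, v, w, x, y, z be the hyperbolic cosines of the six distances among four points forming two triangles glued along a common edge (a hinge), with y the cosine of the common edge and z of the flipped diagonal. Then u²w² + v²x² + y²z² − u² − v² − w² − x² − y² − z² + 1 − 2(uvwx + uwyz + vxyz − vwy − uxy − uvz − wxz) = 0. -/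
/-!
Lift `ℍ` to the hyperboloid `x₀² - x₁² - x₂² = 1` in Minkowski space `ℝ^{1,2}`: then
`cosh (dist p q)` is the Minkowski product of the lifts of `p` and `q`. Hence the matrix of
hyperbolic cosines of the distances among any four points is a Gram matrix of four vectors in a
three-dimensional space, so its determinant vanishes; for the four vertices of a hinge, that
determinant expands to the hinge polynomial.
-/

open UpperHalfPlane Matrix

theorem Matrix.det_mul_eq_zero_of_card_lt {ι κ K : Type*} [Fintype ι] [Fintype κ] [DecidableEq ι]
    [Field K] (A : Matrix ι κ K) (B : Matrix κ ι K) (h : Fintype.card κ < Fintype.card ι) :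
    (A * B).det = 0 := by
  by_contra hdet
  have hfull := rank_of_isUnit _ ((isUnit_iff_isUnit_det _).2 (Ne.isUnit hdet))
  have hle := (rank_mul_le_right A B).trans (rank_le_card_height B)
  omega

theorem Matrix.det_fin_four_of_symm_of_diag_one {R : Type*} [CommRing R] (u v w x y z : R) :
    !![1, u, z, x; u, 1, v, y; z, v, 1, w; x, y, w, 1].det =
      u ^ 2 * w ^ 2 + v ^ 2 * x ^ 2 + y ^ 2 * z ^ 2
        - u ^ 2 - v ^ 2 - w ^ 2 - x ^ 2 - y ^ 2 - z ^ 2 + 1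
        - 2 * (u * v * w * x + u * w * y * z + v * x * y * z
          - v * w * y - u * x * y - u * v * z - w * x * z) := by
  simp [det_succ_row_zero, Fin.sum_univ_succ, Fin.succAbove]
  ring

namespace UpperHalfPlane

noncomputable def toHyperboloid (p : ℍ) : Fin 3 → ℝ :=
  ![(p.re ^ 2 + p.im ^ 2 + 1) / (2 * p.im), (p.re ^ 2 + p.im ^ 2 - 1) / (2 * p.im), p.re / p.im]

theorem cosh_dist_eq_minkowski (p q : ℍ) :
    Real.cosh (dist p q) = toHyperboloid p 0 * toHyperboloid q 0
      - toHyperboloid p 1 * toHyperboloid q 1 - toHyperboloid p 2 * toHyperboloid q 2 := by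
  have hp := p.im_pos.ne'
  have hq := q.im_pos.ne'
  rw [cosh_dist']
  simp only [toHyperboloid, Matrix.cons_val]
  field_simp
  ring

theorem of_cosh_dist_eq_gram {ι : Type*} [Fintype ι] (p : ι → ℍ) :
    Matrix.of (fun i j => Real.cosh (dist (p i) (p j))) =
      Matrix.of (fun i k => toHyperboloid (p i) k) * diagonal (![1, -1, -1] : Fin 3 → ℝ) *
        (Matrix.of (fun i k => toHyperboloid (p i) k))ᵀ := by
  ext i j
  simp [Matrix.mul_apply, Fin.sum_univ_three, cosh_dist_eq_minkowski, sub_eq_add_neg]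

theorem det_of_cosh_dist_eq_zero {ι : Type*} [Fintype ι] [DecidableEq ι] (p : ι → ℍ)
    (hι : 3 < Fintype.card ι) :
    (Matrix.of fun i j => Real.cosh (dist (p i) (p j))).det = 0 := by
  rw [of_cosh_dist_eq_gram, Matrix.mul_assoc]
  exact det_mul_eq_zero_of_card_lt _ _ (by simpa using hι)

end UpperHalfPlane

/-- The hinge relation for four points in the hyperbolic plane:
with `u, v, w, x, y, z` the hyperbolic cosines of the six pairwise distances
of the four points `v_k, v_i, v_l, v_j` of a hinge (`y` for the common edge
`v_i v_j` and `z` for the flipped diagonal `v_k v_l`), the stated polynomial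
relation holds. -/
theorem hinge_relation (vk vi vl vj : UpperHalfPlane)
    (u v w x y z : ℝ)
    (hu : u = Real.cosh (dist vk vi))
    (hv : v = Real.cosh (dist vi vl))
    (hw : w = Real.cosh (dist vl vj))
    (hx : x = Real.cosh (dist vj vk))
    (hy : y = Real.cosh (dist vi vj))
    (hz : z = Real.cosh (dist vk vl)) :
    u ^ 2 * w ^ 2 + v ^ 2 * x ^ 2 + y ^ 2 * z ^ 2
      - u ^ 2 - v ^ 2 - w ^ 2 - x ^ 2 - y ^ 2 - z ^ 2 + 1
      - 2 * (u * v * w * x + u * w * y * z + v * x * y * z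
        - v * w * y - u * x * y - u * v * z - w * x * z) = 0 := by
  have hgram : (Matrix.of fun i j => Real.cosh (dist (![vk, vi, vl, vj] i) (![vk, vi, vl, vj] j)))
      = !![1, u, z, x; u, 1, v, y; z, v, 1, w; x, y, w, 1] := by
    ext i j
    fin_cases i <;> fin_cases j <;> simp [hu, hv, hw, hx, hy, hz, dist_comm]
  rw [← det_fin_four_of_symm_of_diag_one, ← hgram]
  exact det_of_cosh_dist_eq_zero _ (by simp)
end

section
/- Let ρ_k, ρ_l > 0 and h_k, h_l ∈ ℝ satisfy cosh h_k / cosh ρ_k = cosh h_l / cosh ρ_l < 1. Then the function h ↦ sinh h / sinh ρ (with cosh ρ determined so that cosh h / cosh ρ is the given constant) is such that sinh h_k / sinh ρ_k + sinh h_l / sinh ρ_l ≥ 0 if and only if h_k + h_l ≥ 0. -/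
/-!
With `λ = cosh h / cosh ρ < 1` fixed, `λ sinh ρ = √(sinh² h + 1 - λ²)`, so
`sinh h / sinh ρ = λ g(sinh h)` with `g u = u / √(u² + 1 - λ²)`.
Since `g ∘ sinh` is strictly increasing and odd, `g(sinh h_k) + g(sinh h_l) ≥ 0` exactly when
`h_k ≥ -h_l`.
-/

open Real

theorem StrictMono.add_nonneg_iff_of_odd {α β : Type*}
    [AddCommGroup α] [LinearOrder α] [IsOrderedAddMonoid α]
    [AddCommGroup β] [LinearOrder β] [IsOrderedAddMonoid β]
    {f : α → β} (hf : StrictMono f) (hodd : ∀ x, f (-x) = -f x) (a b : α) :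
    0 ≤ f a + f b ↔ 0 ≤ a + b := by
  rw [← neg_le_iff_add_nonneg', ← hodd, hf.le_iff_le, neg_le_iff_add_nonneg']

theorem strictMono_div_sqrt_sq_add {c : ℝ} (hc : 0 < c) :
    StrictMono fun u : ℝ => u / √(u ^ 2 + c) := by
  refine strictMono_of_deriv_pos fun u => ?_
  have hpos : 0 < u ^ 2 + c := by positivity
  have hsqrt : 0 < √(u ^ 2 + c) := sqrt_pos.mpr hpos
  have hderiv : HasDerivAt (fun u : ℝ => u / √(u ^ 2 + c))
      ((1 * √(u ^ 2 + c) - u * (1 / (2 * √(u ^ 2 + c)) * (2 * u))) / √(u ^ 2 + c) ^ 2) u :=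
    (hasDerivAt_id u).div
      ((hasDerivAt_sqrt hpos.ne').comp u (by simpa using (hasDerivAt_pow 2 u).add_const c))
      hsqrt.ne'
  have hnum : 1 * √(u ^ 2 + c) - u * (1 / (2 * √(u ^ 2 + c)) * (2 * u)) = c / √(u ^ 2 + c) := by
    field_simp
    nlinarith [sq_sqrt hpos.le]
  rw [hderiv.deriv, hnum]
  positivity

theorem sqrt_sinh_sq_add_one_sub_sq_cosh_div {h ρ : ℝ} (hρ : 0 ≤ ρ) :
    √(sinh h ^ 2 + (1 - (cosh h / cosh ρ) ^ 2)) = cosh h / cosh ρ * sinh ρ := by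
  have hcosh : cosh ρ ≠ 0 := (cosh_pos ρ).ne'
  have hsq : sinh h ^ 2 + (1 - (cosh h / cosh ρ) ^ 2) = (cosh h / cosh ρ * sinh ρ) ^ 2 := by
    field_simp
    nlinarith [cosh_sq h, cosh_sq ρ]
  rw [hsq, sqrt_sq (by have := sinh_nonneg_iff.mpr hρ; positivity)]

theorem sinh_div_sinh_eq_mul_div_sqrt {h ρ : ℝ} (hρ : 0 < ρ) :
    sinh h / sinh ρ =
      cosh h / cosh ρ * (sinh h / √(sinh h ^ 2 + (1 - (cosh h / cosh ρ) ^ 2))) := by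
  have : 0 < cosh h / cosh ρ := div_pos (cosh_pos h) (cosh_pos ρ)
  rw [sqrt_sinh_sq_add_one_sub_sq_cosh_div hρ.le]
  field_simp [(sinh_pos_iff.mpr hρ).ne']

theorem sinh_ratio_sum_nonneg_iff (ρk ρl hk hl : ℝ)
    (hρk : 0 < ρk) (hρl : 0 < ρl)
    (heq : Real.cosh hk / Real.cosh ρk = Real.cosh hl / Real.cosh ρl)
    (hlt : Real.cosh hk / Real.cosh ρk < 1) :
    0 ≤ Real.sinh hk / Real.sinh ρk + Real.sinh hl / Real.sinh ρl ↔
      0 ≤ hk + hl := by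
  set lam := cosh hk / cosh ρk
  have hlam : 0 < lam := div_pos (cosh_pos hk) (cosh_pos ρk)
  have hc : 0 < 1 - lam ^ 2 := by nlinarith
  rw [sinh_div_sinh_eq_mul_div_sqrt hρk, sinh_div_sinh_eq_mul_div_sqrt hρl, ← heq, ← mul_add,
    mul_nonneg_iff_of_pos_left hlam]
  refine StrictMono.add_nonneg_iff_of_odd
    (f := fun t => sinh t / √(sinh t ^ 2 + (1 - lam ^ 2)))
    ((strictMono_div_sqrt_sq_add hc).comp sinh_strictMono) (fun x => ?_) hk hl
  simp only [sinh_neg, neg_sq, neg_div]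
end
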